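/- arXiv:2507.04668 — 2 statements merged into one kernel-verified Lean document; each statement's English description precedes it below -/
import Mathlib

section
/- Let y, x_1, ..., x_p be square-integrable mean-zero random variables satisfying y = Σ_j β_j x_j + ε with ε uncorrelated with all x_j, and let J ⊆ {1,...,p}. Denote by y_J(x) the L² projection of Σ_j β_j x_j onto span{x_j : j ∈ J} and μ_{J,i} = E[(y(x) − y_J(x)) x_{i;J}^⊥]/√E[(x_{i;J}^⊥)²]. Then E[(y(x) − y_J(x))²] ≤ (max_{1≤j≤p} |μ_{J,j}|) · Σ_{j=1}^p |β_j| · max_j √E[(x_{j;J}^⊥)²], where μ_{J,j} = 0 for j ∈ J. In particular, if E(x_j²) = 1 for all j, then E[(y(x) − y_J(x))²] ≤ (max_j |μ_{J,j}|) Σ_j |β_j|. -/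
/-!
Write `r = s - yJ`. It is orthogonal to `span {x j | j ∈ J}`, which contains `yJ` and every
`xproj j`; hence `E[r²] = E[r s] = ∑ j, β j * E[r x j]` and
`E[r x j] = E[r (x j - xproj j)] = μc j * √E[(x j - xproj j)²]` (for `j ∈ J` both sides vanish).
Bounding each term by its absolute value gives the first inequality. For the second, Pythagoras
gives `E[(x j - xproj j)²] ≤ E[(x j)²] = 1`.
-/

open MeasureTheory

namespace MeasureTheory

variable {Ω : Type*} [MeasurableSpace Ω] {μ : Measure Ω}

theorem MemLp.of_mem_span {p : ENNReal} {s : Set (Ω → ℝ)} (hs : ∀ g ∈ s, MemLp g p μ)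
    {f : Ω → ℝ} (hf : f ∈ Submodule.span ℝ s) : MemLp f p μ := by
  induction hf using Submodule.span_induction with
  | mem g hg => exact hs g hg
  | zero => exact .zero
  | add _ _ _ _ hf hg => exact hf.add hg
  | smul c _ _ hf => exact hf.const_smul c

theorem integral_mul_eq_zero_of_mem_span {s : Set (Ω → ℝ)} (hs : ∀ h ∈ s, MemLp h 2 μ)
    {g : Ω → ℝ} (hg : MemLp g 2 μ) (horth : ∀ h ∈ s, ∫ ω, g ω * h ω ∂μ = 0)
    {f : Ω → ℝ} (hf : f ∈ Submodule.span ℝ s) : ∫ ω, g ω * f ω ∂μ = 0 := by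
  induction hf using Submodule.span_induction with
  | mem h hh => exact horth h hh
  | zero => simp
  | add f₁ f₂ hf₁ hf₂ ih₁ ih₂ =>
    have h₁ : Integrable (fun ω => g ω * f₁ ω) μ := hg.integrable_mul (.of_mem_span hs hf₁)
    have h₂ : Integrable (fun ω => g ω * f₂ ω) μ := hg.integrable_mul (.of_mem_span hs hf₂)
    simp only [Pi.add_apply, mul_add]
    rw [integral_add h₁ h₂, ih₁, ih₂, add_zero]
  | smul c f _ ih =>
    simp only [Pi.smul_apply, smul_eq_mul, mul_left_comm _ c]
    rw [integral_const_mul, ih, mul_zero]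

theorem integral_mul_sub_eq_of_integral_mul_eq_zero {g f h : Ω → ℝ} (hg : MemLp g 2 μ)
    (hf : MemLp f 2 μ) (hh : MemLp h 2 μ) (horth : ∫ ω, g ω * h ω ∂μ = 0) :
    ∫ ω, g ω * (f ω - h ω) ∂μ = ∫ ω, g ω * f ω ∂μ := by
  have hgf : Integrable (fun ω => g ω * f ω) μ := hg.integrable_mul hf
  have hgh : Integrable (fun ω => g ω * h ω) μ := hg.integrable_mul hh
  simp only [mul_sub]
  rw [integral_sub hgf hgh, horth, sub_zero]

theorem integral_sub_sq_eq_integral_sub_mul {f g : Ω → ℝ} (hf : MemLp f 2 μ)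
    (hg : MemLp g 2 μ) (horth : ∫ ω, (f ω - g ω) * g ω ∂μ = 0) :
    ∫ ω, (f ω - g ω) ^ 2 ∂μ = ∫ ω, (f ω - g ω) * f ω ∂μ := by
  simpa [sq] using integral_mul_sub_eq_of_integral_mul_eq_zero (hf.sub hg) hf hg horth

theorem integral_add_sq_of_integral_mul_eq_zero {u v : Ω → ℝ} (hu : MemLp u 2 μ)
    (hv : MemLp v 2 μ) (horth : ∫ ω, u ω * v ω ∂μ = 0) :
    ∫ ω, (u ω + v ω) ^ 2 ∂μ = ∫ ω, u ω ^ 2 ∂μ + ∫ ω, v ω ^ 2 ∂μ := by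
  have hsq : ∀ ω, (u ω + v ω) ^ 2 = u ω ^ 2 + (2 * (u ω * v ω) + v ω ^ 2) := fun ω => by ring
  have huv : Integrable (fun ω => 2 * (u ω * v ω)) μ := (hu.integrable_mul hv).const_mul 2
  have huv2 : Integrable (fun ω => 2 * (u ω * v ω) + v ω ^ 2) μ := huv.add hv.integrable_sq
  simp only [hsq]
  rw [integral_add hu.integrable_sq huv2, integral_add huv hv.integrable_sq,
    integral_const_mul, horth, mul_zero, zero_add]

theorem integral_sub_sq_le_integral_sq {f g : Ω → ℝ} (hf : MemLp f 2 μ)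
    (hg : MemLp g 2 μ) (horth : ∫ ω, (f ω - g ω) * g ω ∂μ = 0) :
    ∫ ω, (f ω - g ω) ^ 2 ∂μ ≤ ∫ ω, f ω ^ 2 ∂μ := by
  have := integral_add_sq_of_integral_mul_eq_zero (hf.sub hg) hg horth
  simp only [Pi.sub_apply, sub_add_cancel] at this
  rw [this, le_add_iff_nonneg_right]
  exact integral_nonneg fun ω => sq_nonneg _

theorem integral_mul_eq_zero_of_integral_sq_eq_zero {d : Ω → ℝ} (hd : MemLp d 2 μ)
    (h : ∫ ω, d ω ^ 2 ∂μ = 0) (g : Ω → ℝ) : ∫ ω, g ω * d ω ∂μ = 0 := by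
  have hd0 : d =ᵐ[μ] 0 := by
    filter_upwards [(integral_eq_zero_iff_of_nonneg (fun ω => sq_nonneg (d ω))
      hd.integrable_sq).mp h] with ω hω
    exact pow_eq_zero_iff two_ne_zero |>.mp hω
  rw [integral_eq_zero_of_ae]
  filter_upwards [hd0] with ω hω
  simp [hω]

theorem integral_mul_eq_div_sqrt_mul_sqrt {d : Ω → ℝ} (hd : MemLp d 2 μ) (g : Ω → ℝ) :
    ∫ ω, g ω * d ω ∂μ = (∫ ω, g ω * d ω ∂μ) / √(∫ ω, d ω ^ 2 ∂μ) * √(∫ ω, d ω ^ 2 ∂μ) := by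
  rcases eq_or_ne √(∫ ω, d ω ^ 2 ∂μ) 0 with h | h
  · have h0 : ∫ ω, d ω ^ 2 ∂μ = 0 :=
      le_antisymm (Real.sqrt_eq_zero'.mp h) (integral_nonneg fun ω => sq_nonneg _)
    rw [integral_mul_eq_zero_of_integral_sq_eq_zero hd h0, zero_div, zero_mul]
  · exact (div_mul_cancel₀ _ h).symm

theorem integral_mul_eq_sum_of_eq_sum {ι : Type*} (t : Finset ι) {g s : Ω → ℝ}
    (hg : MemLp g 2 μ) (β : ι → ℝ) {x : ι → Ω → ℝ} (hx : ∀ i ∈ t, MemLp (x i) 2 μ)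
    (hs : s = fun ω => ∑ i ∈ t, β i * x i ω) :
    ∫ ω, g ω * s ω ∂μ = ∑ i ∈ t, β i * ∫ ω, g ω * x i ω ∂μ := by
  have hint : ∀ i ∈ t, Integrable (fun ω => β i * (g ω * x i ω)) μ := fun i hi =>
    (hg.integrable_mul (hx i hi)).const_mul (β i)
  subst hs
  simp only [Finset.mul_sum, mul_left_comm (g _)]
  rw [integral_finsetSum _ hint]
  simp only [integral_const_mul]

end MeasureTheory

theorem Finset.sum_mul_mul_le_sup'_abs_mul_sum_abs_mul_sup' {ι : Type*} {s : Finset ι}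
    (hs : s.Nonempty) (β c r : ι → ℝ) (hr : ∀ i ∈ s, 0 ≤ r i) :
    ∑ i ∈ s, β i * (c i * r i) ≤ s.sup' hs (fun i => |c i|) * (∑ i ∈ s, |β i|) * s.sup' hs r := by
  have hc : ∀ i ∈ s, |c i| ≤ s.sup' hs (fun i => |c i|) := fun i hi =>
    s.le_sup' (fun i => |c i|) hi
  calc ∑ i ∈ s, β i * (c i * r i)
      ≤ ∑ i ∈ s, |β i| * (s.sup' hs (fun i => |c i|) * s.sup' hs r) := by
        refine Finset.sum_le_sum fun i hi => ?_
        calc β i * (c i * r i) ≤ |β i * (c i * r i)| := le_abs_self _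
          _ = |β i| * (|c i| * r i) := by rw [abs_mul, abs_mul, abs_of_nonneg (hr i hi)]
          _ ≤ _ := by
            have hri := hr i hi
            gcongr
            exacts [(abs_nonneg _).trans (hc i hi), hc i hi, s.le_sup' r hi]
    _ = _ := by rw [← Finset.sum_mul]; ring

theorem residual_variance_le_max_unique_contribution_general
    {Ω : Type*} [MeasurableSpace Ω] {μ : Measure Ω}
    {p : ℕ} (hne : (Finset.univ : Finset (Fin p)).Nonempty)
    (x : Fin p → Ω → ℝ) (β : Fin p → ℝ) (s : Ω → ℝ)
    (hxL2 : ∀ j, MemLp (x j) 2 μ)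
    (hs : s = fun ω => ∑ j, β j * x j ω)
    (J : Finset (Fin p))
    (yJ : Ω → ℝ)
    (hyJmem : yJ ∈ Submodule.span ℝ (x '' (J : Set (Fin p))))
    (hyJorth : ∀ j ∈ J, ∫ ω, (s ω - yJ ω) * x j ω ∂μ = 0)
    (xproj : Fin p → Ω → ℝ)
    (hxpmem : ∀ j, xproj j ∈ Submodule.span ℝ (x '' (J : Set (Fin p))))
    (hxporth : ∀ j, ∀ j' ∈ J, ∫ ω, (x j ω - xproj j ω) * x j' ω ∂μ = 0)
    (μc : Fin p → ℝ)
    (hμc : ∀ j, μc j = if j ∈ J then 0 else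
      (∫ ω, (s ω - yJ ω) * (x j ω - xproj j ω) ∂μ)
        / Real.sqrt (∫ ω, (x j ω - xproj j ω) ^ 2 ∂μ)) :
    (∫ ω, (s ω - yJ ω) ^ 2 ∂μ
      ≤ (Finset.univ.sup' hne fun j => |μc j|) * (∑ j, |β j|)
          * (Finset.univ.sup' hne fun j => Real.sqrt (∫ ω, (x j ω - xproj j ω) ^ 2 ∂μ))) ∧
    ((∀ j, ∫ ω, (x j ω) ^ 2 ∂μ = 1) →
      ∫ ω, (s ω - yJ ω) ^ 2 ∂μ
        ≤ (Finset.univ.sup' hne fun j => |μc j|) * ∑ j, |β j|) := by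
  have hspan : ∀ f ∈ x '' (J : Set (Fin p)), MemLp f 2 μ :=
    Set.forall_mem_image.2 fun j _ => hxL2 j
  have hsL2 : MemLp s 2 μ := hs ▸ memLp_finsetSum _ fun j _ => (hxL2 j).const_mul (β j)
  have hyJL2 : MemLp yJ 2 μ := .of_mem_span hspan hyJmem
  have hxpL2 j : MemLp (xproj j) 2 μ := .of_mem_span hspan (hxpmem j)
  have hres : MemLp (fun ω => s ω - yJ ω) 2 μ := hsL2.sub hyJL2
  have hres_orth : ∀ f ∈ Submodule.span ℝ (x '' (J : Set (Fin p))),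
      ∫ ω, (s ω - yJ ω) * f ω ∂μ = 0 := fun f hf =>
    integral_mul_eq_zero_of_mem_span hspan hres (Set.forall_mem_image.2 hyJorth) hf
  have hcontrib j : ∫ ω, (s ω - yJ ω) * x j ω ∂μ
      = μc j * √(∫ ω, (x j ω - xproj j ω) ^ 2 ∂μ) := by
    rw [hμc j]
    split_ifs with hj
    · rw [hyJorth j hj, zero_mul]
    · rw [← integral_mul_sub_eq_of_integral_mul_eq_zero hres (hxL2 j) (hxpL2 j)
        (hres_orth _ (hxpmem j))]
      exact integral_mul_eq_div_sqrt_mul_sqrt ((hxL2 j).sub (hxpL2 j)) _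
  have hkey : ∫ ω, (s ω - yJ ω) ^ 2 ∂μ
      = ∑ j, β j * (μc j * √(∫ ω, (x j ω - xproj j ω) ^ 2 ∂μ)) := by
    rw [integral_sub_sq_eq_integral_sub_mul hsL2 hyJL2 (hres_orth yJ hyJmem),
      integral_mul_eq_sum_of_eq_sum _ hres β (fun j _ => hxL2 j) hs]
    simp only [hcontrib]
  have hbound := hkey ▸ Finset.univ.sum_mul_mul_le_sup'_abs_mul_sum_abs_mul_sup' hne β μc _
    fun j _ => Real.sqrt_nonneg _
  refine ⟨hbound, fun hunit => hbound.trans ?_⟩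
  have hM : 0 ≤ Finset.univ.sup' hne fun j => |μc j| :=
    Finset.le_sup'_of_le _ (Finset.mem_univ hne.choose) (abs_nonneg _)
  have hR : (Finset.univ.sup' hne fun j => √(∫ ω, (x j ω - xproj j ω) ^ 2 ∂μ)) ≤ 1 :=
    Finset.sup'_le _ _ fun j _ => Real.sqrt_le_one.mpr <| hunit j ▸
      integral_sub_sq_le_integral_sq (hxL2 j) (hxpL2 j)
        (integral_mul_eq_zero_of_mem_span hspan ((hxL2 j).sub (hxpL2 j))
          (Set.forall_mem_image.2 (hxporth j)) (hxpmem j))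
  exact mul_le_of_le_one_right (mul_nonneg hM (Finset.sum_nonneg fun j _ => abs_nonneg _)) hR

/-- If `y = Σ_j β_j x_j + ε` with `ε` uncorrelated with all `x_j`, and
`yJ` is the L² projection of the signal `s = Σ_j β_j x_j` onto span{x_j : j ∈ J},
then `E[(s − yJ)²] ≤ (max_j |μ_{J,j}|) · Σ_j |β_j| · max_j √E[(x_{j;J}^⊥)²]`, where
`μ_{J,j}` is the normalized unique contribution (set to `0` for `j ∈ J`). In
particular, if `E(x_j²) = 1` for all `j`, then `E[(s − yJ)²] ≤ (max_j |μ_{J,j}|) Σ_j |β_j|`. -/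
theorem residual_variance_le_max_unique_contribution
    {Ω : Type*} [MeasurableSpace Ω] {μ : Measure Ω} [IsProbabilityMeasure μ]
    {p : ℕ} (hne : (Finset.univ : Finset (Fin p)).Nonempty)
    (x : Fin p → Ω → ℝ) (β : Fin p → ℝ) (ε y s : Ω → ℝ)
    (hxL2 : ∀ j, MemLp (x j) 2 μ) (hyL2 : MemLp y 2 μ)
    (hxmean : ∀ j, ∫ ω, x j ω ∂μ = 0) (hymean : ∫ ω, y ω ∂μ = 0)
    (hs : s = fun ω => ∑ j, β j * x j ω)
    (hy : y = fun ω => s ω + ε ω)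
    (hεuncorr : ∀ j, ∫ ω, ε ω * x j ω ∂μ = 0)
    (J : Finset (Fin p))
    (yJ : Ω → ℝ)
    (hyJmem : yJ ∈ Submodule.span ℝ (x '' (J : Set (Fin p))))
    (hyJorth : ∀ j ∈ J, ∫ ω, (s ω - yJ ω) * x j ω ∂μ = 0)
    (xproj : Fin p → Ω → ℝ)
    (hxpmem : ∀ j, xproj j ∈ Submodule.span ℝ (x '' (J : Set (Fin p))))
    (hxporth : ∀ j, ∀ j' ∈ J, ∫ ω, (x j ω - xproj j ω) * x j' ω ∂μ = 0)
    (μc : Fin p → ℝ)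
    (hμc : ∀ j, μc j = if j ∈ J then 0 else
      (∫ ω, (s ω - yJ ω) * (x j ω - xproj j ω) ∂μ)
        / Real.sqrt (∫ ω, (x j ω - xproj j ω) ^ 2 ∂μ)) :
    (∫ ω, (s ω - yJ ω) ^ 2 ∂μ
      ≤ (Finset.univ.sup' hne fun j => |μc j|) * (∑ j, |β j|)
          * (Finset.univ.sup' hne fun j => Real.sqrt (∫ ω, (x j ω - xproj j ω) ^ 2 ∂μ))) ∧
    ((∀ j, ∫ ω, (x j ω) ^ 2 ∂μ = 1) →
      ∫ ω, (s ω - yJ ω) ^ 2 ∂μ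
        ≤ (Finset.univ.sup' hne fun j => |μc j|) * ∑ j, |β j|) :=
  residual_variance_le_max_unique_contribution_general hne x β s hxL2 hs J yJ hyJmem hyJorth xproj
    hxpmem hxporth μc hμc
end

section
/- Let y, x_1,...,x_p be mean-zero square-integrable random variables with E(x_j²) = 1 and y = Σ_j β_j x_j + ε, ε uncorrelated with each x_j. For nested selected sets Ĵ_0 = ∅ ⊂ Ĵ_1 ⊂ ... with Ĵ_{m} = Ĵ_{m−1} ∪ {ĵ_m}, suppose for each step m ≤ M the weak-greedy condition |μ_{Ĵ_{m−1}, ĵ_m}| ≥ ξ max_{1≤j≤p} |μ_{Ĵ_{m−1}, j}| holds (with μ_{J,j} the normalized unique contribution and μ_{J,j}=0 for j ∈ J). Then the semi-population residual satisfies E[(y(x) − y_{Ĵ_M}(x))²] ≤ (Σ_j |β_j|)² / (1 + M ξ²), where y(x) = Σ β_j x_j. -/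
open MeasureTheory Finset Submodule
open scoped RealInnerProductSpace

/-!
In `L²(μ)` the hypotheses say that `yproj m` and `xproj m j` are the orthogonal projections of the
signal `s` and of `x j` onto `span {x j | j ∈ Jset m}`, so the argument is Hilbert-space geometry.
Let `a m` be the squared norm of the residual `r m = s - yproj m` and `B = ∑ j, |β j|`.
Adding `x j` with `j = jsel (m + 1)` to the span lowers `a` by at least `(μc m j) ^ 2`, since the
competitor `yproj m + c • (x j - xproj m j)` already achieves that (Pythagoras), while `a m = ⟪r m, s⟫ = ∑ j, β j * ⟪r m, x j⟫ ≤ B * max_j |μc m j|`.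
With the weak greedy condition this gives `B² a (m + 1) ≤ B² a m - ξ² (a m)²`, and together with
`a m ≤ ‖s‖² ≤ B²` this recursion forces `a M ≤ B² / (1 + M ξ²)`.
-/

theorem mul_sub_mul_sq_mul_add_le_sq {a c k C : ℝ} (ha : 0 ≤ a) (hk : 0 ≤ k) (hak : a * k ≤ C) :
    (C * a - c * a ^ 2) * (k + c) ≤ C ^ 2 := by
  -- `C ^ 2 - (C * a - c * a ^ 2) * (k + c) = (C - a * k) * (C - a * c) + (a * c) ^ 2`
  rcases le_total (a * c) C with h | h
  · nlinarith [mul_nonneg (sub_nonneg.mpr hak) (sub_nonneg.mpr h), sq_nonneg (a * c)]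
  · nlinarith [mul_nonneg (mul_nonneg ha hk) (sub_nonneg.mpr h), sq_nonneg (C - a * c)]

theorem le_div_one_add_mul_of_mul_le_mul_sub_sq {a : ℕ → ℝ} {C c : ℝ} {M : ℕ} (hc : 0 ≤ c)
    (ha : ∀ m, 0 ≤ a m) (hC : ∀ m ≤ M, a m ≤ C)
    (hstep : ∀ m < M, C * a (m + 1) ≤ C * a m - c * a m ^ 2) :
    a M ≤ C / (1 + M * c) := by
  obtain hC0 | hCpos := ((ha 0).trans (hC 0 M.zero_le)).eq_or_lt
  · rw [← hC0, zero_div, hC0]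
    exact hC M le_rfl
  rw [le_div_iff₀ (by positivity)]
  suffices h : ∀ m ≤ M, a m * (1 + m * c) ≤ C from h M le_rfl
  intro m hm
  induction m with
  | zero => simpa using hC 0 hm
  | succ m ih =>
    refine le_of_mul_le_mul_left ?_ hCpos
    calc C * (a (m + 1) * (1 + ↑(m + 1) * c))
        = C * a (m + 1) * ((1 + m * c) + c) := by push_cast; ring
      _ ≤ (C * a m - c * a m ^ 2) * ((1 + m * c) + c) :=
          mul_le_mul_of_nonneg_right (hstep m hm) (by positivity)
      _ ≤ C * C := by
          rw [← sq]
          exact mul_sub_mul_sq_mul_add_le_sq (ha m) (by positivity) (ih (by omega))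

theorem sq_mul_le_sq_mul_sub_of_weak_greedy {a a' b c B ξ : ℝ} (hξ : 0 ≤ ξ) (hB : 0 ≤ B)
    (ha : 0 ≤ a) (hres : a ≤ B * b) (hdec : a' ≤ a - c ^ 2) (hgreedy : ξ * b ≤ |c|) :
    B ^ 2 * a' ≤ B ^ 2 * a - ξ ^ 2 * a ^ 2 := by
  have h : ξ * a ≤ B * |c| :=
    calc ξ * a ≤ ξ * (B * b) := mul_le_mul_of_nonneg_left hres hξ
      _ = B * (ξ * b) := by ring
      _ ≤ B * |c| := mul_le_mul_of_nonneg_left hgreedy hB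
  have hsq := pow_le_pow_left₀ (by positivity) h 2
  rw [mul_pow, mul_pow, sq_abs] at hsq
  nlinarith [mul_le_mul_of_nonneg_left hdec (sq_nonneg B)]

section InnerProductSpace

variable {E : Type*} [NormedAddCommGroup E] [InnerProductSpace ℝ E] {K : Submodule ℝ E}

theorem mem_orthogonal_span_image {ι : Type*} {X : ι → E} {T : Set ι} {r : E}
    (h : ∀ i ∈ T, ⟪r, X i⟫ = 0) : r ∈ (span ℝ (X '' T))ᗮ :=
  isOrtho_iff_le.mp (isOrtho_span.mpr fun u hu v hv => by
    obtain ⟨i, hi, rfl⟩ := hv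
    rw [Set.mem_singleton_iff.mp hu]
    exact h i hi) (mem_span_singleton_self r)

theorem norm_sub_le_norm_sub_of_sub_mem_orthogonal {s y z : E} (hy : y ∈ K) (hz : z ∈ K)
    (hs : s - y ∈ Kᗮ) : ‖s - y‖ ≤ ‖s - z‖ := by
  have h := norm_add_sq_eq_norm_sq_add_norm_sq_real
    (inner_left_of_mem_orthogonal (K.sub_mem hy hz) hs)
  rw [sub_add_sub_cancel] at h
  nlinarith [norm_nonneg (s - y), norm_nonneg (s - z), mul_self_nonneg ‖y - z‖]

theorem norm_sub_sq_le_norm_sub_sq_sub_sq {s y y' u : E} (hy : y ∈ K) (hy' : y' ∈ K)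
    (hu : u ∈ K) (hs : s - y' ∈ Kᗮ) :
    ‖s - y'‖ ^ 2 ≤ ‖s - y‖ ^ 2 - (⟪s - y, u⟫ / ‖u‖) ^ 2 := by
  set c := ⟪s - y, u⟫ / ‖u‖ ^ 2 with hc
  have hz : y + c • u ∈ K := K.add_mem hy (K.smul_mem c hu)
  calc ‖s - y'‖ ^ 2 ≤ ‖s - (y + c • u)‖ ^ 2 := by
        gcongr
        exact norm_sub_le_norm_sub_of_sub_mem_orthogonal hy' hz hs
    _ = ‖s - y‖ ^ 2 - 2 * c * ⟪s - y, u⟫ + c ^ 2 * ‖u‖ ^ 2 := by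
        rw [← sub_sub, norm_sub_sq_real, inner_smul_right, norm_smul, Real.norm_eq_abs, mul_pow,
          sq_abs]
        ring
    _ = ‖s - y‖ ^ 2 - (⟪s - y, u⟫ / ‖u‖) ^ 2 := by
        rcases eq_or_ne ‖u‖ 0 with hu0 | hu0
        · simp [c, hu0]
        · rw [hc]
          field_simp
          ring

theorem abs_inner_le_abs_inner_sub_div_norm {r x xp : E} (hr : r ∈ Kᗮ) (hxp : xp ∈ K)
    (hx : x - xp ∈ Kᗮ) (hx1 : ‖x‖ ≤ 1) : |⟪r, x⟫| ≤ |⟪r, x - xp⟫ / ‖x - xp‖| := by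
  have hu : ‖x - xp‖ ≤ 1 := by
    have h := norm_sub_le_norm_sub_of_sub_mem_orthogonal hxp K.zero_mem hx
    rw [sub_zero] at h
    exact h.trans hx1
  rw [inner_sub_right, inner_left_of_mem_orthogonal hxp hr, sub_zero, abs_div, abs_norm]
  rcases (norm_nonneg (x - xp)).eq_or_lt with hu0 | hu0
  · rw [eq_comm, norm_eq_zero, sub_eq_zero] at hu0
    simp [hu0, inner_left_of_mem_orthogonal hxp hr]
  · exact le_div_self (abs_nonneg _) hu0 hu

theorem norm_sub_sq_le_sum_abs_mul {ι : Type*} [Fintype ι] {X : ι → E} {β : ι → ℝ} {y : E}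
    {b : ℝ} (hy : y ∈ K) (hr : ∑ j, β j • X j - y ∈ Kᗮ)
    (hb : ∀ j, |⟪∑ j, β j • X j - y, X j⟫| ≤ b) :
    ‖∑ j, β j • X j - y‖ ^ 2 ≤ (∑ j, |β j|) * b := by
  rw [← real_inner_self_eq_norm_sq, inner_sub_right, inner_left_of_mem_orthogonal hy hr,
    sub_zero, inner_sum, sum_mul]
  refine sum_le_sum fun j _ => ?_
  rw [inner_smul_right]
  exact (le_abs_self _).trans
    (by rw [abs_mul]; exact mul_le_mul_of_nonneg_left (hb j) (abs_nonneg _))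

theorem norm_sum_smul_le_sum_abs {ι : Type*} [Fintype ι] {X : ι → E} (hX : ∀ j, ‖X j‖ ≤ 1)
    (β : ι → ℝ) : ‖∑ j, β j • X j‖ ≤ ∑ j, |β j| :=
  (norm_sum_le _ _).trans <| sum_le_sum fun j _ => by
    rw [norm_smul, Real.norm_eq_abs]
    exact mul_le_of_le_one_right (abs_nonneg _) (hX j)

theorem norm_sub_sq_le_of_weak_greedy {ι : Type*} [Fintype ι] [DecidableEq ι]
    (hne : (univ : Finset ι).Nonempty) {X : ι → E} (hX : ∀ j, ‖X j‖ ≤ 1) (β : ι → ℝ) {ξ : ℝ}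
    (hξ : 0 < ξ) {M : ℕ} {J : ℕ → Finset ι} {jsel : ℕ → ι}
    (hJ : ∀ m < M, J (m + 1) = insert (jsel (m + 1)) (J m)) {Y : ℕ → E} {XP : ℕ → ι → E}
    (hY : ∀ m ≤ M, Y m ∈ span ℝ (X '' J m))
    (hYorth : ∀ m ≤ M, ∑ j, β j • X j - Y m ∈ (span ℝ (X '' J m))ᗮ)
    (hXP : ∀ m ≤ M, ∀ j, XP m j ∈ span ℝ (X '' J m))
    (hXPorth : ∀ m ≤ M, ∀ j, X j - XP m j ∈ (span ℝ (X '' J m))ᗮ) {c : ℕ → ι → ℝ}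
    (hc : ∀ m ≤ M, ∀ j, c m j = if j ∈ J m then 0 else
      ⟪∑ j, β j • X j - Y m, X j - XP m j⟫ / ‖X j - XP m j‖)
    (hgreedy : ∀ m < M, ξ * univ.sup' hne (fun j => |c m j|) ≤ |c m (jsel (m + 1))|) :
    ‖∑ j, β j • X j - Y M‖ ^ 2 ≤ (∑ j, |β j|) ^ 2 / (1 + M * ξ ^ 2) := by
  set S := ∑ j, β j • X j
  set B := ∑ j, |β j|
  have hspan_mono : ∀ m < M, span ℝ (X '' J m) ≤ span ℝ (X '' J (m + 1)) := fun m hm =>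
    span_mono <| Set.image_mono <| by rw [hJ m hm, coe_insert]; exact Set.subset_insert _ _
  have hcoef : ∀ m ≤ M, ∀ j, |⟪S - Y m, X j⟫| ≤ |c m j| := by
    intro m hm j
    rw [hc m hm j]
    split_ifs with hj
    · rw [inner_left_of_mem_orthogonal (subset_span (Set.mem_image_of_mem X hj)) (hYorth m hm),
        abs_zero]
    · exact abs_inner_le_abs_inner_sub_div_norm (hYorth m hm) (hXP m hm j) (hXPorth m hm j) (hX j)
  have hresidual : ∀ m ≤ M, ‖S - Y m‖ ^ 2 ≤ B * univ.sup' hne (fun j => |c m j|) :=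
    fun m hm => norm_sub_sq_le_sum_abs_mul (hY m hm) (hYorth m hm) fun j =>
      (hcoef m hm j).trans (le_sup' (fun j => |c m j|) (mem_univ j))
  have hdecrement : ∀ m < M, ‖S - Y (m + 1)‖ ^ 2 ≤ ‖S - Y m‖ ^ 2 - c m (jsel (m + 1)) ^ 2 := by
    intro m hm
    set j := jsel (m + 1)
    have hu : X j - XP m j ∈ span ℝ (X '' J (m + 1)) :=
      sub_mem (subset_span (Set.mem_image_of_mem X (by rw [hJ m hm]; exact mem_insert_self _ _)))
        (hspan_mono m hm (hXP m hm.le j))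
    have hc_sq : c m j ^ 2 ≤ (⟪S - Y m, X j - XP m j⟫ / ‖X j - XP m j‖) ^ 2 := by
      rw [hc m hm.le j]
      split_ifs
      · simpa using sq_nonneg _
      · rfl
    linarith [norm_sub_sq_le_norm_sub_sq_sub_sq (hspan_mono m hm (hY m hm.le)) (hY (m + 1) hm) hu
      (hYorth (m + 1) hm)]
  have hbounded : ∀ m ≤ M, ‖S - Y m‖ ^ 2 ≤ B ^ 2 := fun m hm => by
    have h := norm_sub_le_norm_sub_of_sub_mem_orthogonal (hY m hm) (zero_mem _) (hYorth m hm)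
    rw [sub_zero] at h
    gcongr
    exact h.trans (norm_sum_smul_le_sum_abs hX β)
  refine le_div_one_add_mul_of_mul_le_mul_sub_sq (a := fun m => ‖S - Y m‖ ^ 2) (sq_nonneg ξ)
    (fun m => sq_nonneg _) hbounded fun m hm => ?_
  exact sq_mul_le_sq_mul_sub_of_weak_greedy hξ.le (sum_nonneg fun j _ => abs_nonneg _)
    (sq_nonneg _) (hresidual m hm.le) (hdecrement m hm) (hgreedy m hm)

end InnerProductSpace

section L2

variable {Ω : Type*} [MeasurableSpace Ω] {μ : Measure Ω}

theorem exists_mem_span_image_ae_eq {E ι : Type*} [NormedAddCommGroup E] [NormedSpace ℝ E]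
    {p : ENNReal} [Fact (1 ≤ p)] {x : ι → Ω → E} {X : ι → Lp E p μ} (hX : ∀ i, X i =ᵐ[μ] x i)
    {T : Set ι} {f : Ω → E} (hf : f ∈ span ℝ (x '' T)) :
    ∃ F ∈ span ℝ (X '' T), F =ᵐ[μ] f := by
  induction hf using span_induction with
  | mem g hg =>
    obtain ⟨i, hi, rfl⟩ := hg
    exact ⟨X i, subset_span (Set.mem_image_of_mem X hi), hX i⟩
  | zero => exact ⟨0, zero_mem _, Lp.coeFn_zero E p μ⟩
  | add g h _ _ hg hh =>
    obtain ⟨G, hG, hGg⟩ := hg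
    obtain ⟨H, hH, hHh⟩ := hh
    exact ⟨G + H, add_mem hG hH, (Lp.coeFn_add G H).trans (hGg.add hHh)⟩
  | smul c g _ hg =>
    obtain ⟨G, hG, hGg⟩ := hg
    exact ⟨c • G, smul_mem _ c hG, (Lp.coeFn_smul c G).trans (hGg.const_smul c)⟩

theorem sum_smul_ae_eq {E ι : Type*} [NormedAddCommGroup E] [NormedSpace ℝ E] {p : ENNReal}
    [Fact (1 ≤ p)] [Fintype ι] {x : ι → Ω → E} {X : ι → Lp E p μ} (hX : ∀ i, X i =ᵐ[μ] x i)
    (β : ι → ℝ) : ⇑(∑ i, β i • X i) =ᵐ[μ] fun ω => ∑ i, β i • x i ω := by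
  filter_upwards [Lp.coeFn_fun_finsetSum univ (fun i => β i • X i),
    ae_all_iff.mpr fun i => (Lp.coeFn_smul (β i) (X i)).trans ((hX i).const_smul (β i))]
    with ω hsum hterm
  rw [hsum]
  exact sum_congr rfl fun i _ => hterm i

theorem integral_mul_eq_inner_of_ae_eq {f g : Ω → ℝ} {F G : Lp ℝ 2 μ} (hF : F =ᵐ[μ] f)
    (hG : G =ᵐ[μ] g) : ∫ ω, f ω * g ω ∂μ = ⟪F, G⟫ := by
  rw [L2.inner_def]
  refine integral_congr_ae ?_
  filter_upwards [hF, hG] with ω hFω hGω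
  simp [hFω, hGω, mul_comm]

theorem integral_sq_eq_norm_sq_of_ae_eq {f : Ω → ℝ} {F : Lp ℝ 2 μ} (hF : F =ᵐ[μ] f) :
    ∫ ω, f ω ^ 2 ∂μ = ‖F‖ ^ 2 := by
  simp only [sq, ← real_inner_self_eq_norm_mul_norm, ← integral_mul_eq_inner_of_ae_eq hF hF]

end L2

theorem semi_population_gsfr_convergence_bound_general
    {Ω : Type*} [MeasurableSpace Ω] {μ : Measure Ω}
    {p : ℕ} (hne : (Finset.univ : Finset (Fin p)).Nonempty)
    (x : Fin p → Ω → ℝ) (β : Fin p → ℝ) (s : Ω → ℝ)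
    (hxL2 : ∀ j, MemLp (x j) 2 μ)
    (hxvar : ∀ j, ∫ ω, (x j ω) ^ 2 ∂μ = 1)
    (hs : s = fun ω => ∑ j, β j * x j ω)
    (ξ : ℝ) (hξ0 : 0 < ξ)
    (M : ℕ) (Jset : ℕ → Finset (Fin p)) (jsel : ℕ → Fin p)
    (hJsucc : ∀ m < M, Jset (m + 1) = insert (jsel (m + 1)) (Jset m))
    (yproj : ℕ → Ω → ℝ) (xproj : ℕ → Fin p → Ω → ℝ)
    (hymem : ∀ m ≤ M, yproj m ∈ Submodule.span ℝ (x '' ((Jset m : Finset (Fin p)) : Set (Fin p))))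
    (hyorth : ∀ m ≤ M, ∀ j ∈ Jset m, ∫ ω, (s ω - yproj m ω) * x j ω ∂μ = 0)
    (hxpmem : ∀ m ≤ M, ∀ j, xproj m j ∈
      Submodule.span ℝ (x '' ((Jset m : Finset (Fin p)) : Set (Fin p))))
    (hxporth : ∀ m ≤ M, ∀ j, ∀ j' ∈ Jset m,
      ∫ ω, (x j ω - xproj m j ω) * x j' ω ∂μ = 0)
    (μc : ℕ → Fin p → ℝ)
    (hμc : ∀ m ≤ M, ∀ j, μc m j = if j ∈ Jset m then 0 else
      (∫ ω, (s ω - yproj m ω) * (x j ω - xproj m j ω) ∂μ)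
        / Real.sqrt (∫ ω, (x j ω - xproj m j ω) ^ 2 ∂μ))
    (hgreedy : ∀ m < M,
      ξ * (Finset.univ.sup' hne fun j => |μc m j|) ≤ |μc m (jsel (m + 1))|) :
    ∫ ω, (s ω - yproj M ω) ^ 2 ∂μ ≤ (∑ j, |β j|) ^ 2 / (1 + M * ξ ^ 2) := by
  set X : Fin p → Lp ℝ 2 μ := fun j => (hxL2 j).toLp (x j)
  have hX : ∀ j, X j =ᵐ[μ] x j := fun j => (hxL2 j).coeFn_toLp
  choose! Y hYspan hY using fun m (hm : m ≤ M) => exists_mem_span_image_ae_eq hX (hymem m hm)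
  choose! XP hXPspan hXP using fun m (hm : m ≤ M) j =>
    exists_mem_span_image_ae_eq hX (hxpmem m hm j)
  have hS : ⇑(∑ j, β j • X j) =ᵐ[μ] s := by
    rw [hs]
    exact sum_smul_ae_eq hX β
  have hres : ∀ m ≤ M, ∑ j, β j • X j - Y m =ᵐ[μ] fun ω => s ω - yproj m ω := fun m hm =>
    (Lp.coeFn_sub _ _).trans (hS.sub (hY m hm))
  have hU : ∀ m ≤ M, ∀ j, X j - XP m j =ᵐ[μ] fun ω => x j ω - xproj m j ω := fun m hm j =>
    (Lp.coeFn_sub _ _).trans ((hX j).sub (hXP m hm j))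
  rw [integral_sq_eq_norm_sq_of_ae_eq (hres M le_rfl)]
  refine norm_sub_sq_le_of_weak_greedy hne (fun j => ?_) β hξ0 hJsucc hYspan (fun m hm => ?_)
    hXPspan (fun m hm j => ?_) (fun m hm j => ?_) hgreedy
  · rw [← sq_le_one_iff₀ (norm_nonneg _), ← integral_sq_eq_norm_sq_of_ae_eq (hX j), hxvar j]
  · refine mem_orthogonal_span_image fun j hj => ?_
    rw [← integral_mul_eq_inner_of_ae_eq (hres m hm) (hX j)]
    exact hyorth m hm j hj
  · refine mem_orthogonal_span_image fun j' hj' => ?_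
    rw [← integral_mul_eq_inner_of_ae_eq (hU m hm j) (hX j')]
    exact hxporth m hm j j' hj'
  · rw [hμc m hm j, integral_mul_eq_inner_of_ae_eq (hres m hm) (hU m hm j),
      integral_sq_eq_norm_sq_of_ae_eq (hU m hm j), Real.sqrt_sq (norm_nonneg _)]

/-- deterministic convergence bound for the (semi-population) GSFR /
projection weak greedy algorithm: if each selected variable achieves at least a
fraction `ξ` of the maximal normalized unique contribution at every step `m ≤ M`
along the nested path `Ĵ_0 = ∅ ⊂ Ĵ_1 ⊂ ⋯`, then the residual of the signal
`y(x) = Σ_j β_j x_j` after `M` steps satisfies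
`E[(y(x) − y_{Ĵ_M}(x))²] ≤ (Σ_j |β_j|)² / (1 + M ξ²)`. -/
theorem semi_population_gsfr_convergence_bound
    {Ω : Type*} [MeasurableSpace Ω] {μ : Measure Ω} [IsProbabilityMeasure μ]
    {p : ℕ} (hne : (Finset.univ : Finset (Fin p)).Nonempty)
    (x : Fin p → Ω → ℝ) (β : Fin p → ℝ) (ε y s : Ω → ℝ)
    (hxL2 : ∀ j, MemLp (x j) 2 μ)
    (hxmean : ∀ j, ∫ ω, x j ω ∂μ = 0)
    (hxvar : ∀ j, ∫ ω, (x j ω) ^ 2 ∂μ = 1)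
    (hs : s = fun ω => ∑ j, β j * x j ω)
    (hy : y = fun ω => s ω + ε ω)
    (hεuncorr : ∀ j, ∫ ω, ε ω * x j ω ∂μ = 0)
    (ξ : ℝ) (hξ0 : 0 < ξ) (hξ1 : ξ < 1)
    (M : ℕ) (Jset : ℕ → Finset (Fin p)) (jsel : ℕ → Fin p)
    (hJ0 : Jset 0 = ∅)
    (hJsucc : ∀ m < M, Jset (m + 1) = insert (jsel (m + 1)) (Jset m))
    (yproj : ℕ → Ω → ℝ) (xproj : ℕ → Fin p → Ω → ℝ)
    (hymem : ∀ m ≤ M, yproj m ∈ Submodule.span ℝ (x '' ((Jset m : Finset (Fin p)) : Set (Fin p))))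
    (hyorth : ∀ m ≤ M, ∀ j ∈ Jset m, ∫ ω, (s ω - yproj m ω) * x j ω ∂μ = 0)
    (hxpmem : ∀ m ≤ M, ∀ j, xproj m j ∈
      Submodule.span ℝ (x '' ((Jset m : Finset (Fin p)) : Set (Fin p))))
    (hxporth : ∀ m ≤ M, ∀ j, ∀ j' ∈ Jset m,
      ∫ ω, (x j ω - xproj m j ω) * x j' ω ∂μ = 0)
    (μc : ℕ → Fin p → ℝ)
    (hμc : ∀ m ≤ M, ∀ j, μc m j = if j ∈ Jset m then 0 else
      (∫ ω, (s ω - yproj m ω) * (x j ω - xproj m j ω) ∂μ)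
        / Real.sqrt (∫ ω, (x j ω - xproj m j ω) ^ 2 ∂μ))
    (hgreedy : ∀ m < M,
      ξ * (Finset.univ.sup' hne fun j => |μc m j|) ≤ |μc m (jsel (m + 1))|) :
    ∫ ω, (s ω - yproj M ω) ^ 2 ∂μ ≤ (∑ j, |β j|) ^ 2 / (1 + M * ξ ^ 2) :=
  semi_population_gsfr_convergence_bound_general hne x β s hxL2 hxvar hs ξ hξ0 M Jset jsel hJsucc
    yproj xproj hymem hyorth hxpmem hxporth μc hμc hgreedy
end
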